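/- arXiv:1712.00391 — 2 statements merged into one kernel-verified Lean document; each statement's English description precedes it below -/
import Mathlib

section
/- In the symmetric 2q-state model, E[(X^{(2)}(n) − 1/(2q))(X^{(3)}(n) − 1/(2q))] = −w_n/(q−1) − z_n/(2q(q−1)) − y_n/(2q), where w_n = E[(X^{(3)}(n) − 1/(2q))²]. -/
/-!
Put `m(i, j, k) = ∑_A p_i(A) X_j(A) X_k(A) = ∑_A p_i p_j p_k / (∑_l p_l)²`, which is symmetric
in `i, j, k` and invariant under the symmetries of the model. Since the posteriors sum to one,
`∑_j m(1, j, q+1) = ∑_A p_1 X_{q+1}`, a multiple of `z + 1/(2q)`. Permuting blocks and positions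
inside blocks shows that `m(1, j, q+1) = m(1, 2, q+1)` for each of the `2q - 2` states
`j ∉ {1, q+1}`, and exchanging the two blocks gives `m(1, 1, q+1) = m(1, q+1, q+1)`, which is
`w` up to centring. Expanding the centred products then yields the identity.
(States are numbered from 1 here, as in the paper; the Lean index is one less.)
-/

/-- Posterior probability of root state `i` given leaf configuration `A`. -/
noncomputable def posterior {n : ℕ} {S : Type*} [Fintype S]
    (p : Fin n → S → ℝ) (i : Fin n) (A : S) : ℝ :=
  p i A / ∑ j, p j A

open Finset

lemma Fintype.sum_eq_add_add_of_eq_off_pair {ι M : Type*} [Fintype ι] [DecidableEq ι]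
    [CommRing M] (f : ι → M) {a b : ι} (hab : a ≠ b) (c : M)
    (h : ∀ j, j ≠ a → j ≠ b → f j = c) :
    ∑ j, f j = f a + f b + ((Fintype.card ι : M) - 2) * c := by
  have hb : b ∈ univ.erase a := mem_erase.2 ⟨hab.symm, mem_univ b⟩
  have hcard : 2 ≤ Fintype.card ι := Fintype.one_lt_card_iff_nontrivial.2 ⟨a, b, hab⟩
  rw [← add_sum_erase univ f (mem_univ a), ← add_sum_erase _ f hb, ← add_assoc,
    sum_eq_card_nsmul fun j hj => h j (ne_of_mem_erase (mem_of_mem_erase hj)) (ne_of_mem_erase hj),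
    card_erase_of_mem hb, card_erase_of_mem (mem_univ a), card_univ, nsmul_eq_mul,
    Nat.cast_sub (by omega), Nat.cast_sub (by omega)]
  ring

section PosteriorMoments

variable {n : ℕ} {S : Type*} [Fintype S]

lemma mul_posterior_comm (p : Fin n → S → ℝ) (i j : Fin n) (A : S) :
    p i A * posterior p j A = p j A * posterior p i A := by
  unfold posterior; ring

lemma mul_sum_posterior {p : Fin n → S → ℝ} (hp : ∀ i A, 0 ≤ p i A) (i : Fin n) (A : S) :
    p i A * ∑ j, posterior p j A = p i A := by
  by_cases hA : ∑ j, p j A = 0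
  -- the posteriors are then junk (`x / 0 = 0`), but `p i A` vanishes too
  · rw [(sum_eq_zero_iff_of_nonneg fun j _ => hp j A).1 hA i (mem_univ i), zero_mul]
  · simp only [posterior, ← sum_div, div_self hA, mul_one]

lemma posterior_apply_perm {p : Fin n → S → ℝ} {g : Equiv.Perm (Fin n)} {e : S ≃ S}
    (he : ∀ i A, p (g i) (e A) = p i A) (i : Fin n) (A : S) :
    posterior p (g i) (e A) = posterior p i A := by
  simp only [posterior, he, ← Equiv.sum_comp g fun j => p j (e A)]

noncomputable def posteriorProdMean (p : Fin n → S → ℝ) (i j k : Fin n) : ℝ :=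
  ∑ A, p i A * (posterior p j A * posterior p k A)

lemma posteriorProdMean_comm_left (p : Fin n → S → ℝ) (i j k : Fin n) :
    posteriorProdMean p i j k = posteriorProdMean p j i k := by
  unfold posteriorProdMean
  simp only [← mul_assoc, mul_posterior_comm p i j]

lemma posteriorProdMean_comm_right (p : Fin n → S → ℝ) (i j k : Fin n) :
    posteriorProdMean p i j k = posteriorProdMean p i k j := by
  simp only [posteriorProdMean, mul_comm (posterior p j _)]

lemma posteriorProdMean_apply_perm {p : Fin n → S → ℝ} {g : Equiv.Perm (Fin n)} {e : S ≃ S}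
    (he : ∀ i A, p (g i) (e A) = p i A) (i j k : Fin n) :
    posteriorProdMean p (g i) (g j) (g k) = posteriorProdMean p i j k := by
  rw [posteriorProdMean, ← Equiv.sum_comp e]
  simp only [he, posterior_apply_perm he, posteriorProdMean]

lemma sum_posteriorProdMean {p : Fin n → S → ℝ} (hp : ∀ i A, 0 ≤ p i A) (i k : Fin n) :
    ∑ j, posteriorProdMean p i j k = ∑ A, p i A * posterior p k A := by
  unfold posteriorProdMean
  rw [sum_comm]
  simp only [← mul_assoc, ← sum_mul, ← mul_sum, mul_sum_posterior hp]

lemma sum_mul_sub_mul_sub (p : Fin n → S → ℝ) (i j k : Fin n) (c : ℝ) :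
    ∑ A, p i A * ((posterior p j A - c) * (posterior p k A - c))
      = posteriorProdMean p i j k - c * ∑ A, p i A * posterior p j A
        - c * ∑ A, p i A * posterior p k A + c ^ 2 * ∑ A, p i A := by
  simp only [posteriorProdMean, mul_sum, ← sum_sub_distrib, ← sum_add_distrib]
  exact sum_congr rfl fun A _ => by ring

end PosteriorMoments

section Blocks

variable {q : ℕ}

def PreservesBlocks (g : Equiv.Perm (Fin (2 * q))) : Prop :=
  ∀ i j : Fin (2 * q), ((g i : ℕ) < q ↔ (g j : ℕ) < q) ↔ ((i : ℕ) < q ↔ (j : ℕ) < q)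

def BlockSymmetric {S : Type*} (p : Fin (2 * q) → S → ℝ) : Prop :=
  ∀ g, PreservesBlocks g → ∃ e : S ≃ S, ∀ i A, p (g i) (e A) = p i A

/-- `finProdFinEquiv` identifies state `i` with the pair (block `i / q`, position `i % q`). -/
def blockPerm (σ : Equiv.Perm (Fin 2)) (τ : Equiv.Perm (Fin q)) : Equiv.Perm (Fin (2 * q)) :=
  finProdFinEquiv.permCongr (σ.prodCongr τ)

@[simp]
lemma blockPerm_finProdFinEquiv (σ : Equiv.Perm (Fin 2)) (τ : Equiv.Perm (Fin q))
    (x : Fin 2 × Fin q) : blockPerm σ τ (finProdFinEquiv x) = finProdFinEquiv (σ x.1, τ x.2) := by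
  simp [blockPerm, Equiv.permCongr_apply, Prod.map]

lemma val_finProdFinEquiv_lt_iff (x : Fin 2 × Fin q) :
    (finProdFinEquiv x : ℕ) < q ↔ x.1 = 0 := by
  obtain ⟨b, r⟩ := x
  fin_cases b <;> simp

lemma Fin.eq_zero_iff_eq_zero_iff_eq {a b : Fin 2} : (a = 0 ↔ b = 0) ↔ a = b := by
  fin_cases a <;> fin_cases b <;> simp

lemma preservesBlocks_blockPerm (σ : Equiv.Perm (Fin 2)) (τ : Equiv.Perm (Fin q)) :
    PreservesBlocks (blockPerm σ τ) := by
  intro i j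
  obtain ⟨x, rfl⟩ := finProdFinEquiv.surjective i
  obtain ⟨y, rfl⟩ := finProdFinEquiv.surjective j
  simp only [blockPerm_finProdFinEquiv, val_finProdFinEquiv_lt_iff,
    Fin.eq_zero_iff_eq_zero_iff_eq, σ.injective.eq_iff]

variable {S : Type*} [Fintype S] {p : Fin (2 * q) → S → ℝ}

lemma BlockSymmetric.posteriorProdMean_blockPerm (hsym : BlockSymmetric p)
    (σ : Equiv.Perm (Fin 2)) (τ : Equiv.Perm (Fin q)) (i j k : Fin (2 * q)) :
    posteriorProdMean p (blockPerm σ τ i) (blockPerm σ τ j) (blockPerm σ τ k)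
      = posteriorProdMean p i j k :=
  let ⟨_, he⟩ := hsym _ (preservesBlocks_blockPerm σ τ)
  posteriorProdMean_apply_perm he i j k

variable [NeZero q]

lemma BlockSymmetric.posteriorProdMean_swap_blocks (hsym : BlockSymmetric p) :
    posteriorProdMean p (finProdFinEquiv (0, 0)) (finProdFinEquiv (0, 0)) (finProdFinEquiv (1, 0))
      = posteriorProdMean p (finProdFinEquiv (0, 0)) (finProdFinEquiv (1, 0))
          (finProdFinEquiv (1, 0)) := by
  have h := hsym.posteriorProdMean_blockPerm (Equiv.swap 0 1) 1
    (finProdFinEquiv (0, 0)) (finProdFinEquiv (0, 0)) (finProdFinEquiv (1, 0))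
  simp only [blockPerm_finProdFinEquiv, Equiv.swap_apply_left, Equiv.swap_apply_right,
    Equiv.Perm.one_apply] at h
  rw [← h, posteriorProdMean_comm_right, posteriorProdMean_comm_left]

lemma BlockSymmetric.posteriorProdMean_eq_of_ne (hsym : BlockSymmetric p) {r : Fin q}
    (hr : r ≠ 0) (j : Fin (2 * q)) (hj0 : j ≠ finProdFinEquiv (0, 0))
    (hjq : j ≠ finProdFinEquiv (1, 0)) :
    posteriorProdMean p (finProdFinEquiv (0, 0)) j (finProdFinEquiv (1, 0))
      = posteriorProdMean p (finProdFinEquiv (0, 0)) (finProdFinEquiv (0, r))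
          (finProdFinEquiv (1, 0)) := by
  obtain ⟨⟨b, r'⟩, rfl⟩ := finProdFinEquiv.surjective j
  have hr' : r' ≠ 0 := by
    rintro rfl
    fin_cases b <;> simp_all
  have h := hsym.posteriorProdMean_blockPerm (Equiv.swap b 0) (Equiv.swap r' r)
    (finProdFinEquiv (0, 0)) (finProdFinEquiv (b, r')) (finProdFinEquiv (1, 0))
  obtain rfl | rfl : b = 0 ∨ b = 1 := by fin_cases b <;> simp
  all_goals simp only [blockPerm_finProdFinEquiv, Equiv.swap_self, Equiv.refl_apply,
    Equiv.swap_apply_left, Equiv.swap_apply_right,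
    Equiv.swap_apply_of_ne_of_ne hr'.symm hr.symm] at h
  · exact h.symm
  · rw [← h, posteriorProdMean_comm_right, posteriorProdMean_comm_left,
      posteriorProdMean_comm_right]

lemma BlockSymmetric.sum_mul_posterior_eq (hsym : BlockSymmetric p) (hp : ∀ i A, 0 ≤ p i A)
    {r : Fin q} (hr : r ≠ 0) :
    ∑ A, p (finProdFinEquiv (0, 0)) A * posterior p (finProdFinEquiv (1, 0)) A
      = 2 * posteriorProdMean p (finProdFinEquiv (0, 0)) (finProdFinEquiv (1, 0))
          (finProdFinEquiv (1, 0))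
        + 2 * ((q : ℝ) - 1) * posteriorProdMean p (finProdFinEquiv (0, 0))
          (finProdFinEquiv (0, r)) (finProdFinEquiv (1, 0)) := by
  classical
  rw [← sum_posteriorProdMean hp,
    Fintype.sum_eq_add_add_of_eq_off_pair _ (by simp) _ (hsym.posteriorProdMean_eq_of_ne hr),
    hsym.posteriorProdMean_swap_blocks, Fintype.card_fin]
  push_cast
  ring

end Blocks

/-- In the symmetric `2q`-state model (state `1` is index `0`, state `2` is index
`1`, state `q+1` is index `q`), with `y_n, z_n` the centered conditional means of
`X⁽²⁾, X⁽³⁾` and `w_n = E[(X⁽³⁾ - 1/(2q))²]` given root `= 1`, and assuming the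
model symmetry under all category-structure-preserving permutations of states:
`E[(X⁽²⁾ - 1/(2q))(X⁽³⁾ - 1/(2q))] = -w_n/(q-1) - z_n/(2q(q-1)) - y_n/(2q)`. -/
theorem stmt9 (q : ℕ) (hq : 2 ≤ q) {S : Type*} [Fintype S]
    (p : Fin (2 * q) → S → ℝ) (y z w : ℝ)
    (hp : ∀ i A, 0 ≤ p i A)
    (hroot : ∀ i, ∑ A, p i A = 1 / (2 * q))
    (hsym : ∀ g : Equiv.Perm (Fin (2 * q)),
      (∀ i j : Fin (2 * q),
        ((((g i : ℕ) < q)) ↔ (((g j : ℕ) < q))) ↔ ((((i : ℕ) < q)) ↔ (((j : ℕ) < q)))) →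
      ∃ e : S ≃ S, ∀ i A, p (g i) (e A) = p i A)
    (hy : y = (2 * q : ℝ) * (∑ A, p ⟨0, by omega⟩ A * posterior p ⟨1, by omega⟩ A)
      - 1 / (2 * q))
    (hz : z = (2 * q : ℝ) * (∑ A, p ⟨0, by omega⟩ A * posterior p ⟨q, by omega⟩ A)
      - 1 / (2 * q))
    (hw : w = (2 * q : ℝ) *
      ∑ A, p ⟨0, by omega⟩ A * (posterior p ⟨q, by omega⟩ A - 1 / (2 * q)) ^ 2) :
    (2 * q : ℝ) * ∑ A, p ⟨0, by omega⟩ A *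
        ((posterior p ⟨1, by omega⟩ A - 1 / (2 * q)) *
          (posterior p ⟨q, by omega⟩ A - 1 / (2 * q)))
      = -w / ((q : ℝ) - 1) - z / (2 * q * ((q : ℝ) - 1)) - y / (2 * q) := by
  have hq1 : (q : ℝ) - 1 ≠ 0 := sub_ne_zero.2 (by norm_cast; omega)
  have hq0 : (q : ℝ) ≠ 0 := by norm_cast; omega
  have : NeZero q := ⟨by omega⟩
  have hsplit := BlockSymmetric.sum_mul_posterior_eq hsym hp (r := ⟨1, by omega⟩)
    (by simp [Fin.ext_iff])
  have hi0 : finProdFinEquiv (0, 0) = (⟨0, by omega⟩ : Fin (2 * q)) := by ext; simp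
  have hi1 : finProdFinEquiv (0, ⟨1, by omega⟩) = (⟨1, by omega⟩ : Fin (2 * q)) := by ext; simp
  have hiq : finProdFinEquiv (1, 0) = (⟨q, by omega⟩ : Fin (2 * q)) := by ext; simp
  rw [hi0, hi1, hiq] at hsplit
  simp only [sq, sum_mul_sub_mul_sub, hroot] at hw ⊢
  subst hy hz hw
  field_simp
  linear_combination -4 * (q : ℝ) ^ 3 * hsplit
end

section
/- In the symmetric 2q-state model with q ≥ 3, E[(f_n(2,σ¹(n)) − 1/(2q))(f_n(q,σ¹(n)) − 1/(2q))] = −2v_n/(q−2) − z_n/(2(q−1)) + q·w_n/((q−1)(q−2)). -/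
section aux
variable {m : ℕ} {S : Type*} [Fintype S] (p : Fin m → S → ℝ)

lemma p_zero (hp : ∀ i A, 0 ≤ p i A) {A : S} (h : ∑ j, p j A = 0) (i : Fin m) : p i A = 0 :=
  (Finset.sum_eq_zero_iff_of_nonneg (fun j _ => hp j A)).mp h i (Finset.mem_univ i)

lemma bayes_pt (hp : ∀ i A, 0 ≤ p i A) (i k : Fin m) (A : S) :
    p i A * posterior p k A = p k A * posterior p i A := by
  unfold posterior
  by_cases h : ∑ j, p j A = 0
  · rw [p_zero p hp h i, p_zero p hp h k]
  · field_simp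

noncomputable def Dq (i k l : Fin m) : ℝ :=
  ∑ A, p i A * (posterior p k A * posterior p l A)

lemma Dq_comm (i k l : Fin m) : Dq p i k l = Dq p i l k :=
  Finset.sum_congr rfl fun A _ => by ring

lemma Dq_bayes (hp : ∀ i A, 0 ≤ p i A) (i k l : Fin m) : Dq p i k l = Dq p k i l :=
  Finset.sum_congr rfl fun A _ => by
    calc p i A * (posterior p k A * posterior p l A)
        = (p i A * posterior p k A) * posterior p l A := by ring
      _ = (p k A * posterior p i A) * posterior p l A := by rw [bayes_pt p hp i k A]
      _ = p k A * (posterior p i A * posterior p l A) := by ring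

lemma Dq_total (hp : ∀ i A, 0 ≤ p i A) (i k : Fin m) :
    ∑ l, Dq p i k l = ∑ A, p i A * posterior p k A := by
  simp only [Dq]
  rw [Finset.sum_comm]
  refine Finset.sum_congr rfl fun A _ => ?_
  by_cases h : ∑ j, p j A = 0
  · rw [p_zero p hp h i]; simp
  · have h1 : (∑ l, posterior p l A) = 1 := by
      unfold posterior; rw [← Finset.sum_div]; field_simp
    calc ∑ l, p i A * (posterior p k A * posterior p l A)
        = p i A * posterior p k A * ∑ l, posterior p l A := by
          rw [Finset.mul_sum]; exact Finset.sum_congr rfl fun l _ => by ring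
      _ = p i A * posterior p k A := by rw [h1, mul_one]

lemma sym_sum (g : Equiv.Perm (Fin m)) (e : S ≃ S) (he : ∀ i A, p (g i) (e A) = p i A)
    (Φ : ℝ → ℝ → ℝ) (i k l : Fin m) :
    ∑ A, p i A * Φ (posterior p k A) (posterior p l A)
      = ∑ A, p (g i) A * Φ (posterior p (g k) A) (posterior p (g l) A) := by
  have hS : ∀ A, ∑ j, p j (e A) = ∑ j, p j A := by
    intro A
    rw [← Equiv.sum_comp g (fun j => p j (e A))]
    exact Finset.sum_congr rfl fun j _ => he j A
  have hpost : ∀ k A, posterior p (g k) (e A) = posterior p k A := by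
    intro k A; unfold posterior; rw [he, hS]
  calc ∑ A, p i A * Φ (posterior p k A) (posterior p l A)
      = ∑ A, p (g i) (e A) * Φ (posterior p (g k) (e A)) (posterior p (g l) (e A)) :=
        Finset.sum_congr rfl fun A _ => by rw [he, hpost, hpost]
    _ = ∑ A, p (g i) A * Φ (posterior p (g k) A) (posterior p (g l) A) :=
        Equiv.sum_comp e (fun A => p (g i) A * Φ (posterior p (g k) A) (posterior p (g l) A))

lemma Dq_sym (g : Equiv.Perm (Fin m)) (e : S ≃ S) (he : ∀ i A, p (g i) (e A) = p i A)
    (i k l : Fin m) : Dq p i k l = Dq p (g i) (g k) (g l) :=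
  sym_sum p g e he (fun x y => x * y) i k l

lemma M_sym (g : Equiv.Perm (Fin m)) (e : S ≃ S) (he : ∀ i A, p (g i) (e A) = p i A)
    (i k : Fin m) :
    ∑ A, p i A * posterior p k A = ∑ A, p (g i) A * posterior p (g k) A :=
  sym_sum p g e he (fun x _ => x) i k k

end aux

section helper
variable {q : ℕ} {S : Type*} [Fintype S]

noncomputable def tau (q : ℕ) [NeZero (2*q)] : Equiv.Perm (Fin (2*q)) :=
  Equiv.addRight (⟨q, by have := Nat.pos_of_ne_zero (NeZero.ne (2*q)); omega⟩ : Fin (2*q))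

lemma tau_val (q : ℕ) [NeZero (2*q)] (i : Fin (2*q)) :
    ((tau q i : ℕ)) = ((i:ℕ) + q) % (2*q) := by
  simp [tau, Fin.add_def]

lemma tau_lt (q : ℕ) [NeZero (2*q)] (i : Fin (2*q)) :
    ((tau q i : ℕ) < q) ↔ ¬ ((i:ℕ) < q) := by
  have hi := i.isLt
  have hq0 : 0 < q := by have := Nat.pos_of_ne_zero (NeZero.ne (2*q)); omega
  rw [tau_val]
  by_cases h : (i:ℕ) < q
  · rw [Nat.mod_eq_of_lt (by omega)]; omega
  · rw [Nat.mod_eq_sub_mod (by omega), Nat.mod_eq_of_lt (by omega)]; omega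

theorem stmt10_helper (q : ℕ) (hq : 3 ≤ q) {S : Type*} [Fintype S]
    (p : Fin (2*q) → S → ℝ)
    (hp : ∀ i A, 0 ≤ p i A)
    (hroot : ∀ i, ∑ A, p i A = 1 / (2 * (q:ℝ)))
    (hsym : ∀ g : Equiv.Perm (Fin (2*q)),
      (∀ i j : Fin (2*q),
        (((g i : ℕ) < q) ↔ ((g j : ℕ) < q)) ↔ (((i:ℕ) < q) ↔ ((j:ℕ) < q))) →
      ∃ e : S ≃ S, ∀ i A, p (g i) (e A) = p i A)
    (i0 i1 iq1 iq iqp1 : Fin (2*q))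
    (h0 : (i0:ℕ) = 0) (h1 : (i1:ℕ) = 1) (hq1v : (iq1:ℕ) = q-1)
    (hqv : (iq:ℕ) = q) (hqpv : (iqp1:ℕ) = q+1)
    (c z v w : ℝ) (hc : c = 1/(2*(q:ℝ)))
    (hz : z = (2*(q:ℝ)) * (∑ A, p i0 A * posterior p iq A) - c)
    (hv : v = (2*(q:ℝ)) * ∑ A, p i0 A * (posterior p i1 A - c)^2)
    (hw : w = (2*(q:ℝ)) * ∑ A, p i0 A * (posterior p iq A - c)^2) :
    (2*(q:ℝ)) * ∑ A, p i0 A * ((posterior p i1 A - c) * (posterior p iq1 A - c))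
      = -(2*v)/((q:ℝ)-2) - z/(2*((q:ℝ)-1)) + (q:ℝ)*w/(((q:ℝ)-1)*((q:ℝ)-2)) := by
  have hq3 : (3:ℝ) ≤ (q:ℝ) := by exact_mod_cast hq
  have hQ0 : (q:ℝ) ≠ 0 := by linarith
  have hQ1 : (q:ℝ) - 1 ≠ 0 := by linarith
  have hQ2 : (q:ℝ) - 2 ≠ 0 := by linarith
  haveI : NeZero (2*q) := ⟨by omega⟩
  -- swap condition helper
  have hswapcond : ∀ a b : Fin (2*q), (((a:ℕ) < q) ↔ ((b:ℕ) < q)) →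
      ∀ i j : Fin (2*q),
        ((((Equiv.swap a b) i : ℕ) < q) ↔ (((Equiv.swap a b) j : ℕ) < q)) ↔
          (((i:ℕ) < q) ↔ ((j:ℕ) < q)) := by
    intro a b hab
    have hpt : ∀ i : Fin (2*q), (((Equiv.swap a b) i : ℕ) < q ↔ (i:ℕ) < q) := by
      intro i
      rcases eq_or_ne i a with rfl | ha
      · rw [Equiv.swap_apply_left]; exact hab.symm
      rcases eq_or_ne i b with rfl | hb
      · rw [Equiv.swap_apply_right]; exact hab
      · rw [Equiv.swap_apply_of_ne_of_ne ha hb]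
    intro i j; rw [hpt i, hpt j]
  obtain ⟨eτ, heτ⟩ := hsym (tau q) (fun i j => by rw [tau_lt q i, tau_lt q j]; tauto)
  have hτ0 : tau q i0 = iq := Fin.ext (by
    rw [tau_val, h0, hqv, Nat.mod_eq_of_lt (by omega)]; omega)
  have hτq : tau q iq = i0 := Fin.ext (by
    rw [tau_val, hqv, h0, Nat.mod_eq_sub_mod (by omega), Nat.mod_eq_of_lt (by omega)]; omega)
  have hτqp : tau q iqp1 = i1 := Fin.ext (by
    rw [tau_val, hqpv, h1, Nat.mod_eq_sub_mod (by omega), Nat.mod_eq_of_lt (by omega)]; omega)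
  -- F2 : Dq i0 i1 i0 = Dq i0 i1 i1
  have F2 : Dq p i0 i1 i0 = Dq p i0 i1 i1 := by
    obtain ⟨e, he⟩ := hsym (Equiv.swap i0 i1) (hswapcond i0 i1 (by rw [h0, h1]; omega))
    have h2 := Dq_sym p (Equiv.swap i0 i1) e he i0 i1 i1
    rw [Equiv.swap_apply_left, Equiv.swap_apply_right] at h2
    rw [Dq_bayes p hp i0 i1 i0, h2]
  have F3 : Dq p i0 iq i0 = Dq p i0 iq iq := by
    have h2 := Dq_sym p (tau q) eτ heτ i0 iq iq
    rw [hτ0, hτq] at h2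
    rw [Dq_bayes p hp i0 iq i0, h2]
  have F4 : Dq p i0 iq iqp1 = Dq p i0 i1 iq := by
    have h2 := Dq_sym p (tau q) eτ heτ i0 iqp1 iq
    rw [hτ0, hτqp, hτq] at h2
    calc Dq p i0 iq iqp1 = Dq p i0 iqp1 iq := Dq_comm p i0 iq iqp1
      _ = Dq p iq i1 i0 := h2
      _ = Dq p iq i0 i1 := Dq_comm p iq i1 i0
      _ = Dq p i0 iq i1 := (Dq_bayes p hp i0 iq i1).symm
      _ = Dq p i0 i1 iq := Dq_comm p i0 iq i1
  have F1 : ∑ A, p i0 A * posterior p iq1 A = ∑ A, p i0 A * posterior p i1 A := by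
    obtain ⟨e, he⟩ := hsym (Equiv.swap i1 iq1) (hswapcond i1 iq1 (by rw [h1, hq1v]; omega))
    have h2 := M_sym p (Equiv.swap i1 iq1) e he i0 i1
    rw [Equiv.swap_apply_left,
        Equiv.swap_apply_of_ne_of_ne (Fin.ne_of_val_ne (by omega))
          (Fin.ne_of_val_ne (by omega))] at h2
    exact h2.symm
  -- case analysis for the two completeness sums
  have hcase1 : ∀ k : Fin (2*q), Dq p i0 i1 k =
      if (k:ℕ) < q then
        (if (k:ℕ) = 0 ∨ (k:ℕ) = 1 then Dq p i0 i1 i1 else Dq p i0 i1 iq1)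
      else Dq p i0 i1 iq := by
    intro k
    by_cases hlt : (k:ℕ) < q
    · rw [if_pos hlt]
      by_cases h01 : (k:ℕ) = 0 ∨ (k:ℕ) = 1
      · rw [if_pos h01]
        rcases h01 with hk0 | hk1
        · rw [show k = i0 from Fin.ext (by omega)]; exact F2
        · rw [show k = i1 from Fin.ext (by omega)]
      · rw [if_neg h01]
        push_neg at h01
        obtain ⟨e, he⟩ := hsym (Equiv.swap k iq1) (hswapcond k iq1 (by rw [hq1v]; omega))
        have h2 := Dq_sym p (Equiv.swap k iq1) e he i0 i1 iq1
        rw [Equiv.swap_apply_of_ne_of_ne (Fin.ne_of_val_ne (by omega))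
              (Fin.ne_of_val_ne (by omega)),
            Equiv.swap_apply_of_ne_of_ne (Fin.ne_of_val_ne (by omega))
              (Fin.ne_of_val_ne (by omega)),
            Equiv.swap_apply_right] at h2
        exact h2.symm
    · rw [if_neg hlt]
      obtain ⟨e, he⟩ := hsym (Equiv.swap k iq) (hswapcond k iq (by rw [hqv]; omega))
      have h2 := Dq_sym p (Equiv.swap k iq) e he i0 i1 iq
      rw [Equiv.swap_apply_of_ne_of_ne (Fin.ne_of_val_ne (by omega))
            (Fin.ne_of_val_ne (by omega)),
          Equiv.swap_apply_of_ne_of_ne (Fin.ne_of_val_ne (by omega))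
            (Fin.ne_of_val_ne (by omega)),
          Equiv.swap_apply_right] at h2
      exact h2.symm
  have hcase2 : ∀ k : Fin (2*q), Dq p i0 iq k =
      if (k:ℕ) = 0 ∨ (k:ℕ) = q then Dq p i0 iq iq else Dq p i0 i1 iq := by
    intro k
    by_cases h0q : (k:ℕ) = 0 ∨ (k:ℕ) = q
    · rw [if_pos h0q]
      rcases h0q with hk | hk
      · rw [show k = i0 from Fin.ext (by omega)]; exact F3
      · rw [show k = iq from Fin.ext (by omega)]
    · rw [if_neg h0q]
      push_neg at h0q
      by_cases hlt : (k:ℕ) < q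
      · obtain ⟨e, he⟩ := hsym (Equiv.swap k i1) (hswapcond k i1 (by rw [h1]; omega))
        have h2 := Dq_sym p (Equiv.swap k i1) e he i0 iq i1
        rw [Equiv.swap_apply_of_ne_of_ne (Fin.ne_of_val_ne (by omega))
              (Fin.ne_of_val_ne (by omega)),
            Equiv.swap_apply_of_ne_of_ne (Fin.ne_of_val_ne (by omega))
              (Fin.ne_of_val_ne (by omega)),
            Equiv.swap_apply_right] at h2
        rw [← h2]
        exact Dq_comm p i0 iq i1
      · obtain ⟨e, he⟩ := hsym (Equiv.swap k iqp1) (hswapcond k iqp1 (by rw [hqpv]; omega))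
        have h2 := Dq_sym p (Equiv.swap k iqp1) e he i0 iq iqp1
        rw [Equiv.swap_apply_of_ne_of_ne (Fin.ne_of_val_ne (by omega))
              (Fin.ne_of_val_ne (by omega)),
            Equiv.swap_apply_of_ne_of_ne (Fin.ne_of_val_ne (by omega))
              (Fin.ne_of_val_ne (by omega)),
            Equiv.swap_apply_right] at h2
        rw [← h2]
        exact F4
  -- evaluate the two completeness sums
  have hsum1 : ∑ k : Fin (2*q), Dq p i0 i1 k
      = 2 * Dq p i0 i1 i1 + ((q:ℝ)-2) * Dq p i0 i1 iq1 + (q:ℝ) * Dq p i0 i1 iq := by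
    rw [Finset.sum_congr rfl fun k _ => hcase1 k,
        Fin.sum_univ_eq_sum_range (fun n => if n < q then
          (if n = 0 ∨ n = 1 then Dq p i0 i1 i1 else Dq p i0 i1 iq1)
          else Dq p i0 i1 iq) (2*q)]
    rw [Finset.range_eq_Ico,
        ← Finset.sum_Ico_consecutive _ (Nat.zero_le q) (by omega : q ≤ 2*q),
        ← Finset.sum_Ico_consecutive _ (by omega : (0:ℕ) ≤ 2) (by omega : 2 ≤ q)]
    have e1 : ∑ k ∈ Finset.Ico 0 2, (if k < q then
          (if k = 0 ∨ k = 1 then Dq p i0 i1 i1 else Dq p i0 i1 iq1)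
          else Dq p i0 i1 iq) = 2 * Dq p i0 i1 i1 := by
      rw [show Finset.Ico 0 2 = {0, 1} from by decide]
      rw [Finset.sum_insert (by decide), Finset.sum_singleton]
      rw [if_pos (by omega : 0 < q), if_pos (by norm_num : (0:ℕ) = 0 ∨ (0:ℕ) = 1),
          if_pos (by omega : 1 < q), if_pos (by norm_num : (1:ℕ) = 0 ∨ (1:ℕ) = 1)]
      ring
    have e2 : ∑ k ∈ Finset.Ico 2 q, (if k < q then
          (if k = 0 ∨ k = 1 then Dq p i0 i1 i1 else Dq p i0 i1 iq1)
          else Dq p i0 i1 iq) = ((q:ℝ)-2) * Dq p i0 i1 iq1 := by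
      rw [Finset.sum_congr rfl (fun k hk => by
        simp only [Finset.mem_Ico] at hk
        rw [if_pos hk.2, if_neg (by omega)]),
        Finset.sum_const, Nat.card_Ico, nsmul_eq_mul, Nat.cast_sub (by omega : 2 ≤ q)]
      norm_num
    have e3 : ∑ k ∈ Finset.Ico q (2*q), (if k < q then
          (if k = 0 ∨ k = 1 then Dq p i0 i1 i1 else Dq p i0 i1 iq1)
          else Dq p i0 i1 iq) = (q:ℝ) * Dq p i0 i1 iq := by
      rw [Finset.sum_congr rfl (fun k hk => by
        simp only [Finset.mem_Ico] at hk
        rw [if_neg (by omega)]),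
        Finset.sum_const, Nat.card_Ico, show 2*q - q = q from by omega, nsmul_eq_mul]
    rw [e1, e2, e3]
  have hsum2 : ∑ k : Fin (2*q), Dq p i0 iq k
      = 2 * Dq p i0 iq iq + (2*(q:ℝ)-2) * Dq p i0 i1 iq := by
    rw [Finset.sum_congr rfl fun k _ => hcase2 k,
        Fin.sum_univ_eq_sum_range (fun n =>
          if n = 0 ∨ n = q then Dq p i0 iq iq else Dq p i0 i1 iq) (2*q)]
    rw [Finset.sum_ite, Finset.sum_const, Finset.sum_const]
    have hfilt : Finset.filter (fun n => n = 0 ∨ n = q) (Finset.range (2*q)) = {0, q} := by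
      ext n
      simp only [Finset.mem_filter, Finset.mem_range, Finset.mem_insert, Finset.mem_singleton]
      omega
    have hcard1 : (Finset.filter (fun n => n = 0 ∨ n = q) (Finset.range (2*q))).card = 2 := by
      rw [hfilt, Finset.card_insert_of_notMem (by simp; omega), Finset.card_singleton]
    have hcard2 : (Finset.filter (fun n => ¬(n = 0 ∨ n = q)) (Finset.range (2*q))).card
        = 2*q - 2 := by
      rw [Finset.filter_not, Finset.card_sdiff_of_subset (Finset.filter_subset _ _),
          Finset.card_range, hcard1]
    rw [hcard1, hcard2, nsmul_eq_mul, nsmul_eq_mul, Nat.cast_sub (by omega : 2 ≤ 2*q)]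
    push_cast
    ring
  have hE1 : 2 * Dq p i0 i1 i1 + ((q:ℝ)-2) * Dq p i0 i1 iq1 + (q:ℝ) * Dq p i0 i1 iq
      = ∑ A, p i0 A * posterior p i1 A := by
    rw [← hsum1]; exact Dq_total p hp i0 i1
  have hE2 : 2 * Dq p i0 iq iq + (2*(q:ℝ)-2) * Dq p i0 i1 iq
      = ∑ A, p i0 A * posterior p iq A := by
    rw [← hsum2]; exact Dq_total p hp i0 iq
  -- expansion of centered second moments
  have hb0 : ∑ A, p i0 A = c := by rw [hc]; exact hroot i0
  have expand : ∀ k l : Fin (2*q),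
      ∑ A, p i0 A * ((posterior p k A - c) * (posterior p l A - c))
        = Dq p i0 k l - c * (∑ A, p i0 A * posterior p k A)
          - c * (∑ A, p i0 A * posterior p l A) + c^2 * c := by
    intro k l
    rw [Finset.sum_congr rfl (fun A _ =>
      show p i0 A * ((posterior p k A - c) * (posterior p l A - c))
        = p i0 A * (posterior p k A * posterior p l A) - c * (p i0 A * posterior p k A)
          - c * (p i0 A * posterior p l A) + c^2 * p i0 A from by ring)]
    rw [Finset.sum_add_distrib, Finset.sum_sub_distrib, Finset.sum_sub_distrib,
        ← Finset.mul_sum, ← Finset.mul_sum, ← Finset.mul_sum, hb0]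
    rfl
  have hvv : v = 2*(q:ℝ) * Dq p i0 i1 i1 - 2 * (∑ A, p i0 A * posterior p i1 A) + c^2 := by
    rw [hv, Finset.sum_congr rfl (fun A _ =>
      show p i0 A * (posterior p i1 A - c)^2
        = p i0 A * ((posterior p i1 A - c) * (posterior p i1 A - c)) from by ring),
      expand i1 i1, hc]
    field_simp
    ring
  have hww : w = 2*(q:ℝ) * Dq p i0 iq iq - 2 * (∑ A, p i0 A * posterior p iq A) + c^2 := by
    rw [hw, Finset.sum_congr rfl (fun A _ =>
      show p i0 A * (posterior p iq A - c)^2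
        = p i0 A * ((posterior p iq A - c) * (posterior p iq A - c)) from by ring),
      expand iq iq, hc]
    field_simp
    ring
  -- eliminate the two cross moments
  have hBB : Dq p i0 i1 iq
      = ((∑ A, p i0 A * posterior p iq A) - 2 * Dq p i0 iq iq) / (2*((q:ℝ)-1)) := by
    rw [eq_div_iff (by intro h; apply hQ1; linarith [mul_eq_zero.mp h] : 2*((q:ℝ)-1) ≠ 0)]
    linear_combination hE2
  have hAA : Dq p i0 i1 iq1
      = ((∑ A, p i0 A * posterior p i1 A) - 2 * Dq p i0 i1 i1
          - (q:ℝ) * Dq p i0 i1 iq) / ((q:ℝ)-2) := by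
    rw [eq_div_iff hQ2]
    linear_combination hE1
  rw [expand i1 iq1, F1, hAA, hBB, hvv, hww, hz, hc]
  field_simp
  ring
end helper

/-- In the symmetric `2q`-state model with `q ≥ 3` (state `2` is index `1`,
state `q` is index `q-1`, state `q+1` is index `q`), with `z_n` the centered
conditional mean of `X⁽³⁾`, `v_n = E[(X⁽²⁾ - 1/(2q))²]`,
`w_n = E[(X⁽³⁾ - 1/(2q))²]` given root `= 1`, and assuming the model symmetry
under all category-structure-preserving permutations of states:
`E[(f_n(2,σ¹) - 1/(2q))(f_n(q,σ¹) - 1/(2q))]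
  = -2v_n/(q-2) - z_n/(2(q-1)) + q·w_n/((q-1)(q-2))`. -/
theorem stmt10 (q : ℕ) (hq : 3 ≤ q) {S : Type*} [Fintype S]
    (p : Fin (2 * q) → S → ℝ) (z v w : ℝ)
    (hp : ∀ i A, 0 ≤ p i A)
    (hroot : ∀ i, ∑ A, p i A = 1 / (2 * q))
    (hsym : ∀ g : Equiv.Perm (Fin (2 * q)),
      (∀ i j : Fin (2 * q),
        ((((g i : ℕ) < q)) ↔ (((g j : ℕ) < q))) ↔ ((((i : ℕ) < q)) ↔ (((j : ℕ) < q)))) →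
      ∃ e : S ≃ S, ∀ i A, p (g i) (e A) = p i A)
    (hz : z = (2 * q : ℝ) * (∑ A, p ⟨0, by omega⟩ A * posterior p ⟨q, by omega⟩ A)
      - 1 / (2 * q))
    (hv : v = (2 * q : ℝ) *
      ∑ A, p ⟨0, by omega⟩ A * (posterior p ⟨1, by omega⟩ A - 1 / (2 * q)) ^ 2)
    (hw : w = (2 * q : ℝ) *
      ∑ A, p ⟨0, by omega⟩ A * (posterior p ⟨q, by omega⟩ A - 1 / (2 * q)) ^ 2) :
    (2 * q : ℝ) * ∑ A, p ⟨0, by omega⟩ A *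
        ((posterior p ⟨1, by omega⟩ A - 1 / (2 * q)) *
          (posterior p ⟨q - 1, by omega⟩ A - 1 / (2 * q)))
      = -(2 * v) / ((q : ℝ) - 2) - z / (2 * ((q : ℝ) - 1))
        + (q : ℝ) * w / (((q : ℝ) - 1) * ((q : ℝ) - 2)) := by
  exact stmt10_helper q hq p hp hroot hsym
    ⟨0, by omega⟩ ⟨1, by omega⟩ ⟨q - 1, by omega⟩ ⟨q, by omega⟩ ⟨q + 1, by omega⟩
    rfl rfl rfl rfl rfl
    (1 / (2 * (q:ℝ))) z v w rfl hz hv hw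
end
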